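/- If G is a connected graph on n ≥ 3 vertices, then ρ₁(G) − ρ₂(G) ≤ ρ₂(G)/(n−2), and equality holds if and only if G is the complete graph K_n. -/

import Mathlib

/-!
Let `D` be the distance matrix and `x ≥ 0` a unit maximizer of the Rayleigh quotient `zᵀDz / zᵀz`
over nonnegative vectors. Since the off-diagonal entries of `D` are positive, `x > 0`, so `Dx = ρ₁x`
and `ρ₁` is the largest Pareto eigenvalue. For a vertex `v`, the maximum of the quotient over
nonnegative vectors vanishing at `v` is again a Pareto eigenvalue; it is not `ρ₁`, whose maximizers
are positive, so it is at most `ρ₂`. Testing it with `x` with its `v`-th entry erased gives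
`ρ₁(1 - 2x_v²) ≤ ρ₂(1 - x_v²)`, and summing over `v` gives `ρ₁(n - 2) ≤ ρ₂(n - 1)`.

In the equality case each erased vector is itself a maximizer, hence a Pareto eigenvector for `ρ₂`,
which reads `D_{iv} x_v = (ρ₁ - ρ₂) x_i`; adding this to its transpose shows that all distances
equal `ρ₁ - ρ₂`, so `G` is complete. Conversely the Pareto eigenvalues of `K_n` are the numbers
`|supp x| - 1`, which gives `ρ₁ = n - 1` and `ρ₂ = n - 2`.
-/

open Matrix SimpleGraph

/-- `x` is a (unit-normalizable) Pareto eigenvector of `A` associated with `lam`: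
`x` is nonzero, entrywise nonnegative, `A x ≥ lam • x` entrywise, and
`lam = xᵀAx / xᵀx`. -/
def IsParetoEigenpair {n : ℕ} (A : Matrix (Fin n) (Fin n) ℝ) (lam : ℝ) (x : Fin n → ℝ) : Prop :=
  x ≠ 0 ∧ (∀ i, 0 ≤ x i) ∧ (∀ i, lam * x i ≤ A.mulVec x i) ∧
    lam = (x ⬝ᵥ A.mulVec x) / (x ⬝ᵥ x)

/-- `lam` is a Pareto eigenvalue of `A`. -/
def IsParetoEigenvalue {n : ℕ} (A : Matrix (Fin n) (Fin n) ℝ) (lam : ℝ) : Prop :=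
  ∃ x, IsParetoEigenpair A lam x

/-- The distance matrix of a graph on `Fin n`, as a real matrix. -/
noncomputable def distMatrix {n : ℕ} (G : SimpleGraph (Fin n)) : Matrix (Fin n) (Fin n) ℝ :=
  fun i j => (G.dist i j : ℝ)

/-- The set `Π(G)` of distance Pareto eigenvalues of `G`. -/
def distParetoSet {n : ℕ} (G : SimpleGraph (Fin n)) : Set ℝ :=
  {lam | IsParetoEigenvalue (distMatrix G) lam}

/-- `a` is the `k`-th largest element of the (finite) set `S`. -/
def IsKthLargest (S : Set ℝ) (k : ℕ) (a : ℝ) : Prop :=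
  a ∈ S ∧ {x ∈ S | a < x}.ncard = k - 1

/-- `a` is the `k`-th smallest element of the (finite) set `S`. -/
def IsKthSmallest (S : Set ℝ) (k : ℕ) (a : ℝ) : Prop :=
  a ∈ S ∧ {x ∈ S | x < a}.ncard = k - 1

/-- The star graph `S_n` on `n` vertices: vertex `0` is adjacent to all others. -/
def starGraph (n : ℕ) : SimpleGraph (Fin n) where
  Adj i j := i ≠ j ∧ (i.val = 0 ∨ j.val = 0)
  symm := ⟨fun i j h => ⟨h.1.symm, h.2.symm⟩⟩
  loopless := ⟨fun i h => h.1 rfl⟩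

/-- The graph `S_n⁺`: the star `S_n` plus one edge between the pendant vertices `1` and `2`. -/
def starPlusGraph (n : ℕ) : SimpleGraph (Fin n) where
  Adj i j := i ≠ j ∧
    ((i.val = 0 ∨ j.val = 0) ∨ (i.val = 1 ∧ j.val = 2) ∨ (i.val = 2 ∧ j.val = 1))
  symm := ⟨fun i j h => ⟨h.1.symm, by tauto⟩⟩
  loopless := ⟨fun i h => h.1 rfl⟩

/-- The wheel graph `W_n` on `n` vertices: hub `0` joined to the cycle `1 - 2 - ⋯ - (n-1) - 1`. -/
def wheelGraph (n : ℕ) : SimpleGraph (Fin n) where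
  Adj i j := i ≠ j ∧ (i.val = 0 ∨ j.val = 0 ∨
    i.val + 1 = j.val ∨ j.val + 1 = i.val ∨
    (i.val = 1 ∧ j.val = n - 1) ∨ (j.val = 1 ∧ i.val = n - 1))
  symm := ⟨fun i j h => ⟨h.1.symm, by tauto⟩⟩
  loopless := ⟨fun i h => h.1 rfl⟩

/-- `K₄ - e`: the complete graph on 4 vertices minus the edge `{0,1}`. -/
def k4MinusE : SimpleGraph (Fin 4) where
  Adj i j := i ≠ j ∧ ¬((i.val = 0 ∧ j.val = 1) ∨ (i.val = 1 ∧ j.val = 0))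
  symm := ⟨fun i j h => ⟨h.1.symm, by tauto⟩⟩
  loopless := ⟨fun i h => h.1 rfl⟩

/-- `C₃ * C₃`: two triangles `{0,1,2}` and `{0,3,4}` glued at the common vertex `0`. -/
def c3c3Graph : SimpleGraph (Fin 5) where
  Adj i j := i ≠ j ∧ (i.val = 0 ∨ j.val = 0 ∨
    (i.val ≤ 2 ∧ j.val ≤ 2) ∨ (3 ≤ i.val ∧ 3 ≤ j.val))
  symm := ⟨fun i j h => ⟨h.1.symm, by tauto⟩⟩
  loopless := ⟨fun i h => h.1 rfl⟩

open Finset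

section RayleighCone

lemma nonpos_of_forall_mul_add_sq_nonpos {δ c ε : ℝ} (hε : 0 < ε)
    (h : ∀ t, 0 < t → t ≤ ε → 2 * t * δ + t ^ 2 * c ≤ 0) : δ ≤ 0 := by
  by_contra! hδ
  set t := min ε (δ / (|c| + 1))
  have ht : 0 < t := lt_min hε (by positivity)
  have htc : t * (|c| + 1) ≤ δ := (le_div_iff₀ (by positivity)).1 (min_le_right _ _)
  have := h t ht (min_le_left _ _)
  nlinarith [neg_abs_le c, mul_le_mul_of_nonneg_left (neg_abs_le c) (sq_nonneg t)]

lemma add_single_neg_nonneg {ι : Type*} [DecidableEq ι] {y : ι → ℝ} (hy : 0 ≤ y) {i : ι} {t : ℝ}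
    (ht : t ≤ y i) : 0 ≤ y + Pi.single i (-t) := fun j => by
  rcases eq_or_ne j i with rfl | hj
  · simpa using ht
  · simpa [Pi.single_eq_of_ne hj] using hy j

variable {ι : Type*} [Fintype ι] {A : Matrix ι ι ℝ} {S : Set ι} {μ : ℝ} {y : ι → ℝ}

structure IsRayleighMaxOn (A : Matrix ι ι ℝ) (S : Set ι) (μ : ℝ) (y : ι → ℝ) : Prop where
  nonneg : 0 ≤ y
  support_subset : Function.support y ⊆ S
  attains : y ⬝ᵥ A *ᵥ y = μ * (y ⬝ᵥ y)
  le : ∀ z, 0 ≤ z → Function.support z ⊆ S → z ⬝ᵥ A *ᵥ z ≤ μ * (z ⬝ᵥ z)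

lemma quadForm_smul (A : Matrix ι ι ℝ) (c : ℝ) (z : ι → ℝ) :
    (c • z) ⬝ᵥ A *ᵥ (c • z) = c ^ 2 * (z ⬝ᵥ A *ᵥ z) := by
  simp only [mulVec_smul, dotProduct_smul, smul_dotProduct, smul_eq_mul]
  ring

variable [DecidableEq ι]

lemma mulVec_single_apply (A : Matrix ι ι ℝ) (i j : ι) (s : ℝ) :
    (A *ᵥ Pi.single j s) i = A i j * s := by
  simp [mulVec_single]

lemma quadForm_add_single (hA : A.IsSymm) (y : ι → ℝ) (i : ι) (s : ℝ) :
    (y + Pi.single i s) ⬝ᵥ A *ᵥ (y + Pi.single i s) =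
      y ⬝ᵥ A *ᵥ y + 2 * s * (A *ᵥ y) i + s ^ 2 * A i i := by
  have hcross : y ⬝ᵥ A *ᵥ Pi.single i s = s * (A *ᵥ y) i := by
    rw [dotProduct_mulVec, dotProduct_single, mul_comm, ← vecMul_transpose, hA.eq]
  simp only [mulVec_add, dotProduct_add, add_dotProduct, hcross, single_dotProduct,
    mulVec_single_apply]
  ring

lemma dotProduct_self_add_single (y : ι → ℝ) (i : ι) (s : ℝ) :
    (y + Pi.single i s) ⬝ᵥ (y + Pi.single i s) = y ⬝ᵥ y + 2 * s * y i + s ^ 2 := by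
  simp only [dotProduct_add, add_dotProduct, dotProduct_single, single_dotProduct, Pi.add_apply,
    Pi.single_eq_same]
  ring

theorem exists_isRayleighMaxOn (A : Matrix ι ι ℝ) (hS : S.Nonempty) :
    ∃ μ y, IsRayleighMaxOn A S μ y ∧ y ⬝ᵥ y = 1 := by
  set K : Set (ι → ℝ) := {y | 0 ≤ y ∧ (∀ i ∉ S, y i = 0) ∧ y ⬝ᵥ y = 1}
  have hK : IsCompact K := by
    refine (isCompact_Icc (a := 0) (b := 1)).of_isClosed_subset ?_
      fun y ⟨hy0, _, hy1⟩ => ⟨hy0, fun i => show y i ≤ 1 from ?_⟩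
    · simp only [K, Set.ofPred_and, Set.ofPred_forall]
      exact (isClosed_le continuous_const continuous_id).inter <|
        (isClosed_iInter fun i => isClosed_iInter fun _ =>
          isClosed_eq (continuous_apply i) continuous_const).inter <|
        isClosed_eq (by fun_prop) continuous_const
    · have : y i * y i ≤ 1 :=
        hy1 ▸ single_le_sum (fun j _ => mul_self_nonneg (y j)) (mem_univ i)
      nlinarith [hy0 i]
  obtain ⟨i, hi⟩ := hS
  have hKne : K.Nonempty := ⟨Pi.single i 1, Pi.single_nonneg.2 zero_le_one,
    fun j hj => Pi.single_eq_of_ne (ne_of_mem_of_not_mem hi hj).symm _, by simp⟩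
  obtain ⟨y, ⟨hy0, hyS, hy1⟩, hymax⟩ :=
    hK.exists_isMaxOn hKne (f := fun y => y ⬝ᵥ A *ᵥ y) (by fun_prop)
  refine ⟨_, y, ⟨hy0, Function.support_subset_iff'.2 hyS, by rw [hy1, mul_one], ?_⟩, hy1⟩
  intro z hz hzS
  rcases eq_or_ne z 0 with rfl | hz0
  · simp
  have hzz : 0 < z ⬝ᵥ z := by simpa using dotProduct_star_self_pos_iff.2 hz0
  set s := Real.sqrt (z ⬝ᵥ z)
  have hs : s ^ 2 = z ⬝ᵥ z := Real.sq_sqrt hzz.le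
  have hs0 : s ≠ 0 := (Real.sqrt_pos.2 hzz).ne'
  have hw : s⁻¹ • z ∈ K := by
    refine ⟨smul_nonneg (inv_nonneg.2 (Real.sqrt_nonneg _)) hz,
      fun i hi => by simp [Function.support_subset_iff'.1 hzS i hi], ?_⟩
    rw [smul_dotProduct, dotProduct_smul, smul_eq_mul, smul_eq_mul, ← mul_assoc, ← hs]
    field_simp
  have : (s⁻¹ • z) ⬝ᵥ A *ᵥ (s⁻¹ • z) ≤ y ⬝ᵥ A *ᵥ y := hymax hw
  rw [quadForm_smul, inv_pow, hs] at this
  rwa [inv_mul_le_iff₀ hzz, mul_comm] at this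

namespace IsRayleighMaxOn

lemma variation_nonpos (h : IsRayleighMaxOn A S μ y) (hA : A.IsSymm) {i : ι} {s : ℝ}
    (hs : 0 ≤ y + Pi.single i s) (hsS : Function.support (y + Pi.single i s) ⊆ S) :
    2 * s * ((A *ᵥ y) i - μ * y i) + s ^ 2 * (A i i - μ) ≤ 0 := by
  have := h.le _ hs hsS
  rw [quadForm_add_single hA, dotProduct_self_add_single, h.attains] at this
  linarith

lemma support_add_single_subset (h : IsRayleighMaxOn A S μ y) {i : ι} (hi : i ∈ S) (s : ℝ) :
    Function.support (y + Pi.single i s) ⊆ S :=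
  (Function.support_add _ _).trans <| Set.union_subset h.support_subset <|
    Pi.support_single_subset.trans (Set.singleton_subset_iff.2 hi)

lemma mulVec_apply_le (h : IsRayleighMaxOn A S μ y) (hA : A.IsSymm) {i : ι} (hi : i ∈ S) :
    (A *ᵥ y) i ≤ μ * y i := by
  have := nonpos_of_forall_mul_add_sq_nonpos one_pos fun t ht _ =>
    h.variation_nonpos hA (add_nonneg h.nonneg (Pi.single_nonneg.2 ht.le))
      (h.support_add_single_subset hi t)
  linarith

lemma le_mulVec_apply (h : IsRayleighMaxOn A S μ y) (hA : A.IsSymm) {i : ι} (hi : 0 < y i) :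
    μ * y i ≤ (A *ᵥ y) i := by
  have := nonpos_of_forall_mul_add_sq_nonpos (δ := μ * y i - (A *ᵥ y) i) (c := A i i - μ) hi
    fun t _ hty => by
      linear_combination h.variation_nonpos hA (add_single_neg_nonneg h.nonneg hty)
        (h.support_add_single_subset (h.support_subset hi.ne') _)
  linarith

lemma mulVec_apply_eq (h : IsRayleighMaxOn A S μ y) (hA : A.IsSymm) {i : ι} (hi : 0 < y i) :
    (A *ᵥ y) i = μ * y i :=
  le_antisymm (h.mulVec_apply_le hA (h.support_subset hi.ne')) (h.le_mulVec_apply hA hi)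

lemma pos (h : IsRayleighMaxOn A Set.univ μ y) (hA : A.IsSymm)
    (hoff : ∀ i j, i ≠ j → 0 < A i j) (hy : y ≠ 0) (v : ι) : 0 < y v := by
  by_contra! hv
  replace hv : y v = 0 := le_antisymm hv (h.nonneg v)
  obtain ⟨u, hu⟩ : ∃ u, y u ≠ 0 := Function.ne_iff.1 hy
  have huv : u ≠ v := by rintro rfl; exact hu hv
  have hpos : 0 < ∑ j, A v j * y j := by
    refine sum_pos' (fun j _ => ?_)
      ⟨u, mem_univ u, mul_pos (hoff v u huv.symm) ((h.nonneg u).lt_of_ne' hu)⟩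
    rcases eq_or_ne j v with rfl | hj
    · simp [hv]
    · exact mul_nonneg (hoff v j hj.symm).le (h.nonneg j)
  have := h.mulVec_apply_le hA (Set.mem_univ v)
  rw [hv, mul_zero] at this
  exact this.not_gt hpos

lemma quadForm_add_single_neg (h : IsRayleighMaxOn A S μ y) (hA : A.IsSymm) {v : ι}
    (hv : 0 < y v) (hvv : A v v = 0) :
    (y + Pi.single v (-y v)) ⬝ᵥ A *ᵥ (y + Pi.single v (-y v)) = μ * (y ⬝ᵥ y - 2 * y v ^ 2) := by
  rw [quadForm_add_single hA, h.attains, h.mulVec_apply_eq hA hv, hvv]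
  ring

end IsRayleighMaxOn

end RayleighCone

section Pareto

variable {n : ℕ} {A : Matrix (Fin n) (Fin n) ℝ} {μ : ℝ} {x : Fin n → ℝ}

lemma IsParetoEigenpair.mulVec_apply_eq (h : IsParetoEigenpair A μ x) {i : Fin n}
    (hi : x i ≠ 0) : (A *ᵥ x) i = μ * x i := by
  obtain ⟨hx, hx0, hle, hμ⟩ := h
  have hsum : ∑ j, x j * ((A *ᵥ x) j - μ * x j) = 0 := by
    have hxx : x ⬝ᵥ x ≠ 0 := dotProduct_self_eq_zero.not.2 hx
    have : x ⬝ᵥ A *ᵥ x = μ * (x ⬝ᵥ x) := by rw [hμ, div_mul_cancel₀ _ hxx]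
    simp only [mul_sub, sum_sub_distrib, mul_left_comm _ μ, ← mul_sum]
    exact sub_eq_zero.2 this
  have := (sum_eq_zero_iff_of_nonneg fun j _ => mul_nonneg (hx0 j) (sub_nonneg.2 (hle j))).1
    hsum i (mem_univ i)
  exact sub_eq_zero.1 ((mul_eq_zero.1 this).resolve_left hi)

theorem IsRayleighMaxOn.isParetoEigenpair {S : Set (Fin n)} (h : IsRayleighMaxOn A S μ x)
    (hA : A.IsSymm) (hoff : ∀ i j, i ≠ j → 0 ≤ A i j) (hx : x ≠ 0) :
    IsParetoEigenpair A μ x := by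
  refine ⟨hx, h.nonneg, fun i => ?_, ?_⟩
  · rcases (show (0 : ℝ) ≤ x i from h.nonneg i).lt_or_eq with hi | hi
    · exact h.le_mulVec_apply hA hi
    · rw [← hi, mul_zero, mulVec, dotProduct]
      refine sum_nonneg fun j _ => ?_
      rcases eq_or_ne i j with rfl | hij
      · simp [← hi]
      · exact mul_nonneg (hoff i j hij) (h.nonneg j)
  · rw [h.attains, mul_div_cancel_right₀ _ (dotProduct_self_eq_zero.not.2 hx)]

/- By complementary slackness, a Pareto eigenvector of `A` is an eigenvector of the compression
`diagonal 1_s * A` of `A` to its support `s`. -/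
theorem finite_setOf_isParetoEigenvalue (A : Matrix (Fin n) (Fin n) ℝ) :
    {μ | IsParetoEigenvalue A μ}.Finite := by
  refine (Set.finite_iUnion fun s : Set (Fin n) => Module.End.finite_hasEigenvalue
    (toLin' (diagonal (s.indicator (1 : Fin n → ℝ)) * A))).subset ?_
  intro μ hμ
  obtain ⟨x, hx⟩ : IsParetoEigenvalue A μ := hμ
  refine Set.mem_iUnion.2 ⟨Function.support x,
    Module.End.hasEigenvalue_of_hasEigenvector ⟨?_, hx.1⟩⟩
  rw [Module.End.mem_eigenspace_iff, toLin'_apply, ← mulVec_mulVec]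
  ext i
  by_cases hi : x i = 0
  · simp [mulVec_diagonal, hi]
  · simp [mulVec_diagonal, hi, hx.mulVec_apply_eq hi]

end Pareto

section KthLargest

variable {S : Set ℝ} {a b : ℝ}

lemma IsKthLargest.isGreatest (h : IsKthLargest S 1 a) (hS : S.Finite) : IsGreatest S a := by
  refine ⟨h.1, fun x hx => not_lt.1 fun hax => ?_⟩
  have : {x ∈ S | a < x} = ∅ := (Set.ncard_eq_zero (hS.subset (Set.sep_subset _ _))).1 h.2
  exact this.subset ⟨hx, hax⟩

lemma IsKthLargest.lt_of_isGreatest (hb : IsKthLargest S 2 b) (ha : IsGreatest S a) : b < a := by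
  obtain ⟨c, hc⟩ := Set.ncard_eq_one.1 hb.2
  refine (ha.2 hb.1).lt_of_ne fun hba => ?_
  have : c ∈ {x ∈ S | b < x} := hc ▸ rfl
  exact (ha.2 this.1).not_gt (hba ▸ this.2)

lemma IsKthLargest.le_of_isGreatest (hb : IsKthLargest S 2 b) (ha : IsGreatest S a) {x : ℝ}
    (hx : x ∈ S) (hxa : x ≠ a) : x ≤ b := by
  obtain ⟨c, hc⟩ := Set.ncard_eq_one.1 hb.2
  have hmem : ∀ y ∈ S, b < y → y = c := fun y hy hby => by
    have : y ∈ {x ∈ S | b < x} := ⟨hy, hby⟩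
    rwa [hc] at this
  exact not_lt.1 fun hbx =>
    hxa ((hmem x hx hbx).trans (hmem a ha.1 (hb.lt_of_isGreatest ha)).symm)

end KthLargest

section DistanceLike

variable {n : ℕ} {A : Matrix (Fin n) (Fin n) ℝ} {ρ1 ρ2 : ℝ} {x : Fin n → ℝ}

theorem exists_pos_isRayleighMaxOn_univ (hA : A.IsSymm) (hoff : ∀ i j, i ≠ j → 0 < A i j)
    (hρ1 : IsGreatest {μ | IsParetoEigenvalue A μ} ρ1) :
    ∃ x, IsRayleighMaxOn A Set.univ ρ1 x ∧ x ⬝ᵥ x = 1 ∧ ∀ i, 0 < x i := by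
  obtain ⟨x₀, hx₀⟩ : IsParetoEigenvalue A ρ1 := hρ1.1
  obtain ⟨i, -⟩ : ∃ i, x₀ i ≠ 0 := Function.ne_iff.1 hx₀.1
  obtain ⟨μ, x, hx, hx1⟩ := exists_isRayleighMaxOn A ⟨i, Set.mem_univ i⟩
  have hx0 : x ≠ 0 := by rintro rfl; simp at hx1
  obtain rfl : μ = ρ1 := by
    refine le_antisymm
      (hρ1.2 ⟨x, hx.isParetoEigenpair hA (fun i j hij => (hoff i j hij).le) hx0⟩) ?_
    rw [hx₀.2.2.2, div_le_iff₀ (by simpa using dotProduct_star_self_pos_iff.2 hx₀.1)]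
    exact hx.le x₀ hx₀.2.1 (Set.subset_univ _)
  exact ⟨x, hx, hx1, hx.pos hA hoff hx0⟩

theorem quadForm_le_of_apply_eq_zero (hA : A.IsSymm) (hoff : ∀ i j, i ≠ j → 0 < A i j)
    (hρ1 : IsGreatest {μ | IsParetoEigenvalue A μ} ρ1)
    (hρ2 : ∀ μ, IsParetoEigenvalue A μ → μ ≠ ρ1 → μ ≤ ρ2)
    {z : Fin n → ℝ} (hz : 0 ≤ z) {v : Fin n} (hzv : z v = 0) :
    z ⬝ᵥ A *ᵥ z ≤ ρ2 * (z ⬝ᵥ z) := by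
  rcases eq_or_ne z 0 with rfl | hz0
  · simp
  obtain ⟨u, hu⟩ : ∃ u, z u ≠ 0 := Function.ne_iff.1 hz0
  have hzS : Function.support z ⊆ {v}ᶜ := by rintro i hi rfl; exact hi hzv
  obtain ⟨μ, y, hy, hy1⟩ := exists_isRayleighMaxOn A ⟨u, hzS hu⟩
  have hy0 : y ≠ 0 := by rintro rfl; simp at hy1
  have hμ : μ ≤ ρ2 := by
    refine hρ2 μ ⟨y, hy.isParetoEigenpair hA (fun i j hij => (hoff i j hij).le) hy0⟩ ?_
    -- otherwise `y` would be a global maximizer, hence positive, yet `y v = 0`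
    rintro rfl
    obtain ⟨x, hx, -⟩ := exists_pos_isRayleighMaxOn_univ hA hoff hρ1
    have hy' : IsRayleighMaxOn A Set.univ μ y :=
      ⟨hy.nonneg, Set.subset_univ _, hy.attains, hx.le⟩
    exact (hy'.pos hA hoff hy0 v).ne' (Function.notMem_support.1 fun hv => hy.support_subset hv rfl)
  calc z ⬝ᵥ A *ᵥ z ≤ μ * (z ⬝ᵥ z) := hy.le z hz hzS
    _ ≤ ρ2 * (z ⬝ᵥ z) :=
      mul_le_mul_of_nonneg_right hμ (by simpa using dotProduct_star_self_nonneg z)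

theorem mul_one_sub_two_sq_le (hA : A.IsSymm) (hdiag : ∀ i, A i i = 0)
    (hoff : ∀ i j, i ≠ j → 0 < A i j) (hρ1 : IsGreatest {μ | IsParetoEigenvalue A μ} ρ1)
    (hρ2 : ∀ μ, IsParetoEigenvalue A μ → μ ≠ ρ1 → μ ≤ ρ2)
    (hx : IsRayleighMaxOn A Set.univ ρ1 x) (hx1 : x ⬝ᵥ x = 1) (hxpos : ∀ i, 0 < x i) (v : Fin n) :
    ρ1 * (1 - 2 * x v ^ 2) ≤ ρ2 * (1 - x v ^ 2) := by
  have := quadForm_le_of_apply_eq_zero hA hoff hρ1 hρ2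
    (add_single_neg_nonneg (i := v) hx.nonneg le_rfl) (v := v) (by simp)
  rw [hx.quadForm_add_single_neg hA (hxpos v) (hdiag v), dotProduct_self_add_single, hx1] at this
  linear_combination this

lemma sum_mul_one_sub_sq (hx1 : x ⬝ᵥ x = 1) (a b : ℝ) :
    ∑ v, (b * (1 - x v ^ 2) - a * (1 - 2 * x v ^ 2)) = b * (n - 1) - a * (n - 2) := by
  have hsq : ∑ v, x v ^ 2 = 1 := by simpa [dotProduct, sq] using hx1
  calc ∑ v, (b * (1 - x v ^ 2) - a * (1 - 2 * x v ^ 2))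
      = ∑ _v : Fin n, (b - a) + (2 * a - b) * ∑ v, x v ^ 2 := by
        rw [mul_sum, ← sum_add_distrib]; exact sum_congr rfl fun v _ => by ring
    _ = b * (n - 1) - a * (n - 2) := by simp [hsq]; ring

theorem mul_sub_two_le_mul_sub_one (hA : A.IsSymm) (hdiag : ∀ i, A i i = 0)
    (hoff : ∀ i j, i ≠ j → 0 < A i j) (hρ1 : IsGreatest {μ | IsParetoEigenvalue A μ} ρ1)
    (hρ2 : ∀ μ, IsParetoEigenvalue A μ → μ ≠ ρ1 → μ ≤ ρ2) :
    ρ1 * (n - 2) ≤ ρ2 * (n - 1) := by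
  obtain ⟨x, hx, hx1, hxpos⟩ := exists_pos_isRayleighMaxOn_univ hA hoff hρ1
  have := sum_nonneg fun v (_ : v ∈ univ) =>
    sub_nonneg.2 (mul_one_sub_two_sq_le hA hdiag hoff hρ1 hρ2 hx hx1 hxpos v)
  rw [sum_mul_one_sub_sq hx1] at this
  linarith

theorem apply_mul_eq_of_mul_one_sub_two_sq_eq (hA : A.IsSymm) (hdiag : ∀ i, A i i = 0)
    (hoff : ∀ i j, i ≠ j → 0 < A i j) (hρ1 : IsGreatest {μ | IsParetoEigenvalue A μ} ρ1)
    (hρ2 : ∀ μ, IsParetoEigenvalue A μ → μ ≠ ρ1 → μ ≤ ρ2)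
    (hx : IsRayleighMaxOn A Set.univ ρ1 x) (hx1 : x ⬝ᵥ x = 1) (hxpos : ∀ i, 0 < x i) {v : Fin n}
    (heq : ρ1 * (1 - 2 * x v ^ 2) = ρ2 * (1 - x v ^ 2)) {i : Fin n} (hiv : i ≠ v) :
    A i v * x v = (ρ1 - ρ2) * x i := by
  set z := x + Pi.single v (-x v)
  have hz : IsRayleighMaxOn A {v}ᶜ ρ2 z := by
    refine ⟨add_single_neg_nonneg hx.nonneg le_rfl, by rintro j hj rfl; simp [z] at hj, ?_,
      fun w hw hwS => quadForm_le_of_apply_eq_zero hA hoff hρ1 hρ2 hw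
        (Function.notMem_support.1 fun hv => hwS hv rfl)⟩
    rw [hx.quadForm_add_single_neg hA (hxpos v) (hdiag v), dotProduct_self_add_single, hx1]
    linear_combination heq
  have := hz.mulVec_apply_eq hA (i := i) (by simpa [z, Pi.single_eq_of_ne hiv] using hxpos i)
  simp only [z, mulVec_add, Pi.add_apply, mulVec_single_apply, Pi.single_eq_of_ne hiv, add_zero,
    hx.mulVec_apply_eq hA (hxpos i)] at this
  linear_combination -this

theorem apply_eq_sub_of_mul_sub_two_eq (hA : A.IsSymm) (hdiag : ∀ i, A i i = 0)
    (hoff : ∀ i j, i ≠ j → 0 < A i j) (hρ1 : IsGreatest {μ | IsParetoEigenvalue A μ} ρ1)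
    (hρ2 : ∀ μ, IsParetoEigenvalue A μ → μ ≠ ρ1 → μ ≤ ρ2) (heq : ρ1 * (n - 2) = ρ2 * (n - 1))
    {i j : Fin n} (hij : i ≠ j) : A i j = ρ1 - ρ2 := by
  obtain ⟨x, hx, hx1, hxpos⟩ := exists_pos_isRayleighMaxOn_univ hA hoff hρ1
  have hle := mul_one_sub_two_sq_le hA hdiag hoff hρ1 hρ2 hx hx1 hxpos
  have hzero := (sum_eq_zero_iff_of_nonneg fun v _ => sub_nonneg.2 (hle v)).1
    (by rw [sum_mul_one_sub_sq hx1, heq, sub_self])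
  have hvert : ∀ v, ρ1 * (1 - 2 * x v ^ 2) = ρ2 * (1 - x v ^ 2) :=
    fun v => (sub_eq_zero.1 (hzero v (mem_univ v))).symm
  have hij' :=
    apply_mul_eq_of_mul_one_sub_two_sq_eq hA hdiag hoff hρ1 hρ2 hx hx1 hxpos (hvert j) hij
  have hji' :=
    apply_mul_eq_of_mul_one_sub_two_sq_eq hA hdiag hoff hρ1 hρ2 hx hx1 hxpos (hvert i) hij.symm
  rw [hA.apply] at hji'
  have : (A i j - (ρ1 - ρ2)) * (x i + x j) = 0 := by linear_combination hij' + hji'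
  exact sub_eq_zero.1 ((mul_eq_zero.1 this).resolve_right (add_pos (hxpos i) (hxpos j)).ne')

end DistanceLike

section Graph

variable {n : ℕ} {μ ρ1 ρ2 : ℝ} {x : Fin n → ℝ}

lemma SimpleGraph.Connected.eq_top_of_dist_eq {V : Type*} [Nontrivial V] {G : SimpleGraph V}
    (hG : G.Connected) (h : ∀ u v u' v', u ≠ v → u' ≠ v' → G.dist u v = G.dist u' v') : G = ⊤ := by
  obtain ⟨a, -⟩ := exists_pair_ne V
  obtain ⟨b, hab⟩ := hG.preconnected.exists_adj_of_nontrivial a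
  ext u v
  refine ⟨Adj.ne, fun huv => dist_eq_one_iff_adj.1 ?_⟩
  rw [h u v a b huv hab.ne, dist_eq_one_iff_adj.2 hab]

lemma distMatrix_isSymm (G : SimpleGraph (Fin n)) : (distMatrix G).IsSymm := by
  ext i j
  simp [distMatrix, dist_comm]

lemma distMatrix_apply_self (G : SimpleGraph (Fin n)) (i : Fin n) : distMatrix G i i = 0 := by
  simp [distMatrix]

lemma distMatrix_pos {G : SimpleGraph (Fin n)} (hG : G.Connected) {i j : Fin n} (hij : i ≠ j) :
    0 < distMatrix G i j :=
  Nat.cast_pos.2 (hG.pos_dist_of_ne hij)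

lemma distMatrix_top_apply (i j : Fin n) :
    distMatrix (⊤ : SimpleGraph (Fin n)) i j = if i = j then 0 else 1 := by
  split_ifs with hij
  · simp [hij, distMatrix]
  · simp [distMatrix, dist_top_of_ne hij]

lemma IsParetoEigenpair.add_one_eq_card_support {A : Matrix (Fin n) (Fin n) ℝ}
    (hA : ∀ i j, A i j = if i = j then 0 else 1) (h : IsParetoEigenpair A μ x) :
    μ + 1 = #{i | x i ≠ 0} := by
  set σ := ∑ j, x j
  have hmulVec : ∀ i, (A *ᵥ x) i = σ - x i := fun i => by
    calc (A *ᵥ x) i = ∑ j, A i j * x j := rfl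
      _ = ∑ j, (x j - if i = j then x j else 0) :=
          sum_congr rfl fun j _ => by rw [hA]; split_ifs <;> simp
      _ = σ - x i := by rw [sum_sub_distrib, sum_ite_eq, if_pos (mem_univ i)]
  have hσ : 0 < σ := by
    obtain ⟨i, hi⟩ : ∃ i, x i ≠ 0 := Function.ne_iff.1 h.1
    exact sum_pos' (fun j _ => h.2.1 j) ⟨i, mem_univ i, (h.2.1 i).lt_of_ne' hi⟩
  have hterm : ∀ i, (μ + 1) * x i = if x i ≠ 0 then σ else 0 := fun i => by
    split_ifs with hi
    · linear_combination hmulVec i - h.mulVec_apply_eq hi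
    · simp [not_not.1 hi]
  have : (μ + 1) * σ = #{i | x i ≠ 0} * σ := by
    rw [mul_sum, sum_congr rfl fun i _ => hterm i, sum_ite, sum_const_zero, add_zero, sum_const,
      nsmul_eq_mul]
  exact mul_right_cancel₀ hσ.ne' this

theorem eq_sub_one_and_le_sub_two_of_distParetoSet_top
    (hρ1 : IsGreatest (distParetoSet (⊤ : SimpleGraph (Fin n))) ρ1)
    (hρ2 : ρ2 ∈ distParetoSet (⊤ : SimpleGraph (Fin n))) (hlt : ρ2 < ρ1) :
    ρ1 = n - 1 ∧ ρ2 ≤ n - 2 := by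
  have hoff : ∀ i j, i ≠ j → 0 < distMatrix (⊤ : SimpleGraph (Fin n)) i j := fun i j hij => by
    simp [distMatrix_top_apply, hij]
  obtain ⟨x, hx, hx1, hxpos⟩ := exists_pos_isRayleighMaxOn_univ (distMatrix_isSymm ⊤) hoff hρ1
  have hpareto := hx.isParetoEigenpair (distMatrix_isSymm ⊤) (fun i j hij => (hoff i j hij).le)
    (by rintro rfl; simp at hx1)
  have hρ1 : ρ1 + 1 = n := by
    rw [hpareto.add_one_eq_card_support distMatrix_top_apply, filter_true_of_mem
      fun i _ => (hxpos i).ne', card_univ, Fintype.card_fin]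
  obtain ⟨y, hy⟩ := hρ2
  have hρ2 := hy.add_one_eq_card_support distMatrix_top_apply
  have hk : #{i | y i ≠ 0} < n := by exact_mod_cast (by linarith : (#{i | y i ≠ 0} : ℝ) < n)
  have : (#{i | y i ≠ 0} : ℝ) + 1 ≤ n := by exact_mod_cast hk
  exact ⟨by linarith, by linarith⟩

end Graph

theorem stmt11 (n : ℕ) (hn : 3 ≤ n) (G : SimpleGraph (Fin n)) (hG : G.Connected)
    (ρ1 ρ2 : ℝ)
    (hρ1 : IsKthLargest (distParetoSet G) 1 ρ1)
    (hρ2 : IsKthLargest (distParetoSet G) 2 ρ2) :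
    ρ1 - ρ2 ≤ ρ2 / ((n : ℝ) - 2) ∧
    (ρ1 - ρ2 = ρ2 / ((n : ℝ) - 2) ↔ G = ⊤) := by
  have hρ1' := hρ1.isGreatest (finite_setOf_isParetoEigenvalue _)
  have hρ2' : ∀ μ ∈ distParetoSet G, μ ≠ ρ1 → μ ≤ ρ2 := fun μ => hρ2.le_of_isGreatest hρ1'
  have hoff : ∀ i j, i ≠ j → 0 < distMatrix G i j := fun i j => distMatrix_pos hG
  have hgap := mul_sub_two_le_mul_sub_one (distMatrix_isSymm G) (distMatrix_apply_self G) hoff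
    hρ1' hρ2'
  have hn2 : (0 : ℝ) < n - 2 := by
    have : (3 : ℝ) ≤ n := by exact_mod_cast hn
    linarith
  have hiff : ρ1 - ρ2 = ρ2 / (n - 2) ↔ ρ1 * (n - 2) = ρ2 * (n - 1) := by
    rw [eq_div_iff hn2.ne']
    constructor <;> intro h <;> linarith
  refine ⟨by rw [le_div_iff₀ hn2]; linarith, hiff.trans ⟨fun heq => ?_, ?_⟩⟩
  · have : Nontrivial (Fin n) := Fin.nontrivial_iff_two_le.2 (by omega)
    refine hG.eq_top_of_dist_eq fun u v u' v' huv huv' => Nat.cast_injective (R := ℝ) ?_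
    have hdist : ∀ i j, i ≠ j → distMatrix G i j = ρ1 - ρ2 := fun i j =>
      apply_eq_sub_of_mul_sub_two_eq (distMatrix_isSymm G) (distMatrix_apply_self G) hoff hρ1' hρ2'
        heq
    exact (hdist u v huv).trans (hdist u' v' huv').symm
  · rintro rfl
    obtain ⟨rfl, h2⟩ :=
      eq_sub_one_and_le_sub_two_of_distParetoSet_top hρ1' hρ2.1 (hρ2.lt_of_isGreatest hρ1')
    nlinarith
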